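/- arXiv:1711.09727 — 2 statements merged into one kernel-verified Lean document; each statement's English description precedes it below -/
import Mathlib

section
/- Let η(x) = max_{s ∈ S(f(x))} η̃(x,s) where η̃ : ℝ^{n+1} → ℝ and f : ℝ^n → ℝ are continuous and S is the set-valued sign map, and assume η is homogeneous of degree d with positive weight vector r. Let γ : ℝ^n → ℝ be continuous, homogeneous of the same degree d and weights r, with γ(x) ≥ 0 for all x, and such that for all x ≠ 0 and s ∈ S(f(x)), γ(x) = 0 implies η̃(x,s) < 0. Then there exists k₀ > 0 such that η(x) - k₀ γ(x) < 0 for all x ∈ ℝ^n \ {0}. -/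
/-- The set-valued sign map. -/
noncomputable def Ssign (a : ℝ) : Set ℝ :=
  if a > 0 then {1} else if a < 0 then {-1} else Set.Icc (-1) 1

lemma Ssign_subset (a : ℝ) : Ssign a ⊆ Set.Icc (-1 : ℝ) 1 := by
  unfold Ssign
  split_ifs <;> simp [Set.singleton_subset_iff]

lemma Ssign_graph_closed :
    IsClosed {q : ℝ × ℝ | q.2 ∈ Ssign q.1} := by
  have : {q : ℝ × ℝ | q.2 ∈ Ssign q.1}
      = ({a : ℝ | 0 ≤ a} ×ˢ {(1:ℝ)}) ∪ ({a : ℝ | a ≤ 0} ×ˢ {(-1:ℝ)})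
        ∪ ({(0:ℝ)} ×ˢ Set.Icc (-1:ℝ) 1) := by
    ext ⟨a, s⟩
    simp only [Set.mem_setOf_eq, Set.mem_union, Set.mem_prod, Set.mem_singleton_iff,
      Set.mem_Icc, Ssign]
    rcases lt_trichotomy a 0 with h | h | h
    · simp only [if_neg (not_lt.mpr h.le), if_pos h, Set.mem_singleton_iff]
      constructor
      · intro hs; left; right; exact ⟨h.le, hs⟩
      · rintro ((⟨h1, _⟩ | ⟨_, hs⟩) | ⟨h0, _⟩)
        · exact absurd h1 (not_le.mpr h)
        · exact hs
        · exact absurd h0 h.ne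
    · subst h
      simp only [lt_irrefl, if_neg, if_false, Set.mem_Icc]
      constructor
      · intro hs; right; exact ⟨trivial, hs⟩
      · rintro ((⟨_, rfl⟩ | ⟨_, rfl⟩) | ⟨_, hs⟩)
        · norm_num
        · norm_num
        · exact hs
    · simp only [if_pos h, Set.mem_singleton_iff]
      constructor
      · intro hs; left; left; exact ⟨h.le, hs⟩
      · rintro ((⟨_, hs⟩ | ⟨h1, _⟩) | ⟨h0, _⟩)
        · exact hs
        · exact absurd h1 (not_le.mpr h)
        · exact absurd h0 h.ne'
  rw [this]
  exact (((isClosed_le continuous_const continuous_id).prod isClosed_singleton).union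
    ((isClosed_le continuous_id continuous_const).prod isClosed_singleton)).union
    (isClosed_singleton.prod isClosed_Icc)

/-- Homogeneous domination lemma: if η(x) = max_{s ∈ S(f(x))} η̃(x,s) is homogeneous of
degree d with positive weights, γ ≥ 0 is continuous homogeneous of the same degree and
weights, and γ(x) = 0 forces η̃(x,s) < 0 for x ≠ 0, then η - k₀ γ < 0 away from the
origin for some k₀ > 0. -/
theorem homogeneous_domination {n : ℕ}
    (ηt : (Fin n → ℝ) × ℝ → ℝ) (f : (Fin n → ℝ) → ℝ) (η γ : (Fin n → ℝ) → ℝ)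
    (hηt : Continuous ηt) (hf : Continuous f)
    (hmax : ∀ x, IsGreatest ((fun s => ηt (x, s)) '' Ssign (f x)) (η x))
    (r : Fin n → ℝ) (hr : ∀ i, 0 < r i) (d : ℝ)
    (hηhom : ∀ lam > (0:ℝ), ∀ x, η (fun i => lam ^ (r i) * x i) = lam ^ d * η x)
    (hγcont : Continuous γ)
    (hγhom : ∀ lam > (0:ℝ), ∀ x, γ (fun i => lam ^ (r i) * x i) = lam ^ d * γ x)
    (hγpos : ∀ x, 0 ≤ γ x)
    (himp : ∀ x, x ≠ 0 → ∀ s ∈ Ssign (f x), γ x = 0 → ηt (x, s) < 0) :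
    ∃ k₀ > (0:ℝ), ∀ x : Fin n → ℝ, x ≠ 0 → η x - k₀ * γ x < 0 := by
  classical
  -- the compact set: unit sphere
  set K : Set (Fin n → ℝ) := Metric.sphere 0 1 with hK
  have hKne0 : ∀ x ∈ K, x ≠ 0 := by
    intro x hx h0
    rw [h0] at hx
    simp [hK] at hx
  -- the compact set A of admissible pairs
  set A : Set ((Fin n → ℝ) × ℝ) :=
    {p | p.1 ∈ K ∧ p.2 ∈ Ssign (f p.1)} with hA
  have hAclosed : IsClosed A := by
    have h1 : IsClosed {p : (Fin n → ℝ) × ℝ | p.1 ∈ K} :=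
      (Metric.isClosed_sphere).preimage continuous_fst
    have h2 : IsClosed {p : (Fin n → ℝ) × ℝ | p.2 ∈ Ssign (f p.1)} :=
      Ssign_graph_closed.preimage ((hf.comp continuous_fst).prodMk continuous_snd)
    exact h1.inter h2
  have hAcomp : IsCompact A := by
    apply IsCompact.of_isClosed_subset
      ((isCompact_sphere (0 : Fin n → ℝ) 1).prod isCompact_Icc) hAclosed
    rintro ⟨x, s⟩ ⟨hx, hs⟩
    exact ⟨hx, Ssign_subset _ hs⟩
  -- the monotone open cover
  set V : ℕ → Set ((Fin n → ℝ) × ℝ) :=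
    fun k => {p | ηt p < (k + 1) * γ p.1} with hV
  have hVopen : ∀ k, IsOpen (V k) :=
    fun k => isOpen_lt hηt (continuous_const.mul (hγcont.comp continuous_fst))
  have hAcover : A ⊆ ⋃ k, V k := by
    rintro ⟨x, s⟩ ⟨hx, hs⟩
    rcases eq_or_lt_of_le (hγpos x) with hγ0 | hγ0
    · refine Set.mem_iUnion.mpr ⟨0, ?_⟩
      have := himp x (hKne0 x hx) s hs hγ0.symm
      simp only [hV, Set.mem_setOf_eq]
      rw [← hγ0]
      simpa using this
    · obtain ⟨k, hk⟩ := exists_nat_gt (ηt (x, s) / γ x)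
      refine Set.mem_iUnion.mpr ⟨k, ?_⟩
      simp only [hV, Set.mem_setOf_eq]
      have : ηt (x, s) < k * γ x := by
        rw [div_lt_iff₀ hγ0] at hk
        linarith
      nlinarith
  obtain ⟨F, hF⟩ := hAcomp.elim_finite_subcover V hVopen hAcover
  set N : ℕ := F.sup id with hN
  have hVN : A ⊆ V N := by
    intro p hp
    obtain ⟨k, hkF, hk⟩ := Set.mem_iUnion₂.mp (hF hp)
    have hkN : k ≤ N := Finset.le_sup (f := id) hkF
    simp only [hV, Set.mem_setOf_eq] at hk ⊢
    have : ((k : ℝ) + 1) * γ p.1 ≤ ((N : ℝ) + 1) * γ p.1 := by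
      have : (k : ℝ) ≤ N := Nat.cast_le.mpr hkN
      nlinarith [hγpos p.1]
    linarith
  refine ⟨(N : ℝ) + 1, by positivity, ?_⟩
  -- first, the bound on K
  have hKbound : ∀ x ∈ K, η x - ((N : ℝ) + 1) * γ x < 0 := by
    intro x hx
    obtain ⟨⟨s, hs, hηs⟩, _⟩ := hmax x
    have : (x, s) ∈ A := ⟨hx, hs⟩
    have := hVN this
    simp only [hV, Set.mem_setOf_eq] at this
    simp only at hηs
    linarith [hηs ▸ this]
  -- now extend by homogeneity
  intro x hx
  -- find lam > 0 with dilation of x on the sphere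
  obtain ⟨i₀, hi₀⟩ : ∃ i, x i ≠ 0 := by
    by_contra h
    push_neg at h
    exact hx (funext h)
  set φ : ℝ → ℝ := fun lam => ‖fun i => lam ^ (r i) * x i‖ with hφ
  have hφcont : Continuous φ := by
    apply Continuous.norm
    apply continuous_pi
    intro i
    exact (Real.continuous_rpow_const (hr i).le).mul continuous_const
  have hφ0 : φ 0 = 0 := by
    have : (fun i => (0:ℝ) ^ (r i) * x i) = 0 := by
      funext i; simp [Real.zero_rpow (hr i).ne']
    simp [hφ, this]
  set b : ℝ := |x i₀|⁻¹ ^ (r i₀)⁻¹ with hb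
  have hbnn : 0 ≤ b := Real.rpow_nonneg (inv_nonneg.mpr (abs_nonneg _)) _
  have hφb : 1 ≤ φ b := by
    have h1 : |b ^ (r i₀)| * |x i₀| ≤ φ b := by
      simpa [Real.norm_eq_abs, abs_mul] using norm_le_pi_norm (fun i => b ^ (r i) * x i) i₀
    have h2 : b ^ (r i₀) = |x i₀|⁻¹ := by
      rw [hb, ← Real.rpow_mul (inv_nonneg.mpr (abs_nonneg _)),
        inv_mul_cancel₀ (hr i₀).ne', Real.rpow_one]
    rw [abs_of_nonneg (Real.rpow_nonneg hbnn _), h2,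
      inv_mul_cancel₀ (abs_ne_zero.mpr hi₀)] at h1
    exact h1
  obtain ⟨lam, hlamIcc, hlam1⟩ :=
    intermediate_value_Icc hbnn (hφcont.continuousOn) ⟨by rw [hφ0]; norm_num, hφb⟩
  have hlampos : 0 < lam := by
    rcases eq_or_lt_of_le hlamIcc.1 with h | h
    · exfalso; rw [← h] at hlam1; rw [hφ0] at hlam1; norm_num at hlam1
    · exact h
  have hmem : (fun i => lam ^ (r i) * x i) ∈ K := by
    simp only [hK, Metric.mem_sphere, dist_zero_right]
    exact hlam1
  have hbd := hKbound _ hmem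
  rw [hηhom lam hlampos x, hγhom lam hlampos x] at hbd
  have hld : (0:ℝ) < lam ^ d := Real.rpow_pos_of_pos hlampos d
  nlinarith [hγpos x]
end

section
/- Let d_0 ∈ [-1,0] and m ≥ 2, and define weights r_i = 1 - d_0(m-i) for i = 1,...,m+1. Fix an integer d_V > 2m-1 and positive reals ℓ_1,...,ℓ_{m-1}. Then the function V : ℝ^m → ℝ defined by V(e) = Σ_{i=1}^{m-1} ∫_{⌈e_{i+1}⌋^{r_i/r_{i+1}}}^{ℓ_i e_i} (⌈x⌋^{(d_V - r_i)/r_i} - ⌈e_{i+1}⌋^{(d_V - r_i)/r_{i+1}}) dx + |e_m|^{d_V}/d_V, where ⌈a⌋^b = sign(a)|a|^b, is positive definite: V(e) ≥ 0 for all e, and V(e) = 0 if and only if e = 0. -/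
/-- The signed power function `⌈x⌋^b = sign(x)|x|^b`. -/
noncomputable def spow (x b : ℝ) : ℝ := Real.sign x * |x| ^ b
lemma spow_zero (b : ℝ) : spow 0 b = 0 := by simp [spow]

lemma spow_of_pos {x : ℝ} (hx : 0 < x) (b : ℝ) : spow x b = x ^ b := by
  simp [spow, Real.sign_of_pos hx, abs_of_pos hx]

lemma spow_neg (x b : ℝ) : spow (-x) b = -spow x b := by
  simp [spow, Real.sign_neg, neg_mul]

lemma spow_of_neg {x : ℝ} (hx : x < 0) (b : ℝ) : spow x b = -((-x) ^ b) := by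
  have h := spow_neg (-x) b
  rw [neg_neg] at h
  rw [h, spow_of_pos (by linarith : (0:ℝ) < -x)]

lemma spow_of_nonneg {x : ℝ} (hx : 0 ≤ x) {b : ℝ} (hb : 0 < b) : spow x b = x ^ b := by
  rcases hx.eq_or_lt with h | h
  · rw [← h, spow_zero, Real.zero_rpow hb.ne']
  · exact spow_of_pos h b

lemma spow_strictMono {p : ℝ} (hp : 0 < p) : StrictMono fun x => spow x p := by
  refine strictMono_of_odd_strictMonoOn_nonneg (fun x => spow_neg x p) ?_
  intro x hx y hy hxy
  simp only
  rw [spow_of_nonneg hx hp, spow_of_nonneg hy hp]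
  exact Real.rpow_lt_rpow hx hxy hp

lemma spow_spow (x a b : ℝ) : spow (spow x a) b = spow x (a * b) := by
  rcases lt_trichotomy x 0 with h | h | h
  · rw [spow_of_neg h a, spow_neg, spow_of_pos (Real.rpow_pos_of_pos (by linarith) a),
      ← Real.rpow_mul (by linarith : (0:ℝ) ≤ -x), spow_of_neg h]
  · subst h; rw [spow_zero, spow_zero, spow_zero]
  · rw [spow_of_pos h, spow_of_pos (Real.rpow_pos_of_pos h a), ← Real.rpow_mul h.le,
      spow_of_pos h]

lemma spow_key {p : ℝ} (hp : 0 < p) (c b : ℝ) :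
    0 ≤ (∫ x in c..b, (spow x p - spow c p)) ∧
      ((∫ x in c..b, (spow x p - spow c p)) = 0 ↔ b = c) := by
  have hmono := spow_strictMono hp
  have hm2 : Monotone fun x => spow x p - spow c p :=
    fun u v huv => sub_le_sub_right (hmono.monotone huv) _
  have hposgt : c < b → 0 < ∫ x in c..b, (spow x p - spow c p) := by
    intro h
    refine intervalIntegral.intervalIntegral_pos_of_pos_on hm2.intervalIntegrable ?_ h
    intro x hx
    have := hmono hx.1
    simp only at this ⊢
    linarith
  have hposlt : b < c → 0 < ∫ x in c..b, (spow x p - spow c p) := by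
    intro h
    have h1 : (∫ x in c..b, (spow x p - spow c p))
        = ∫ x in b..c, (spow c p - spow x p) := by
      rw [intervalIntegral.integral_symm, ← intervalIntegral.integral_neg]
      congr 1; funext x; ring
    rw [h1]
    have ha : Antitone fun x => spow c p - spow x p :=
      fun u v huv => sub_le_sub_left (hmono.monotone huv) _
    refine intervalIntegral.intervalIntegral_pos_of_pos_on ha.intervalIntegrable ?_ h
    intro x hx
    have := hmono hx.2
    simp only at this ⊢
    linarith
  rcases lt_trichotomy b c with h | h | h
  · have h2 := hposlt h
    exact ⟨h2.le, ⟨fun h' => absurd h' (ne_of_gt h2), fun h' => absurd h' (ne_of_lt h)⟩⟩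
  · subst h
    simp [intervalIntegral.integral_same]
  · have h2 := hposgt h
    exact ⟨h2.le, ⟨fun h' => absurd h' (ne_of_gt h2), fun h' => absurd h' (ne_of_gt h)⟩⟩


/-- The homogeneous Lyapunov function V of the paper (eq. (12)) is positive definite,
for any degree d₀ ∈ [-1,0], weights r_i = 1 - d₀(m-i), integer d_V > 2m-1 and positive
gains ℓ_i. -/
theorem homogeneous_lyapunov_positive_definite
    (m : ℕ) (hm : 2 ≤ m) (d₀ : ℝ) (hd₀ : -1 ≤ d₀) (hd₀' : d₀ ≤ 0)
    (dV : ℕ) (hdV : 2 * m - 1 < dV)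
    (ℓ : ℕ → ℝ) (hℓ : ∀ i, 1 ≤ i → i ≤ m - 1 → 0 < ℓ i) :
    let r : ℕ → ℝ := fun i => 1 - d₀ * ((m : ℝ) - (i : ℝ))
    let V : (ℕ → ℝ) → ℝ := fun e =>
      (∑ i ∈ Finset.Icc 1 (m - 1),
        ∫ x in (spow (e (i + 1)) (r i / r (i + 1)))..(ℓ i * e i),
          (spow x (((dV : ℝ) - r i) / r i)
            - spow (e (i + 1)) (((dV : ℝ) - r i) / r (i + 1))))
      + |e m| ^ (dV : ℕ) / (dV : ℝ)
    (∀ e, 0 ≤ V e) ∧ ∀ e, (V e = 0 ↔ ∀ i ∈ Finset.Icc 1 m, e i = 0) := by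
  intro r V
  have hm' : (2:ℝ) ≤ (m:ℝ) := by exact_mod_cast hm
  have hdV2 : 2 * m ≤ dV := by omega
  have hdVR : (2:ℝ) * (m:ℝ) ≤ (dV:ℝ) := by exact_mod_cast hdV2
  have hdVne : dV ≠ 0 := by omega
  have hdVpos : (0:ℝ) < (dV:ℝ) := by
    have : 0 < dV := by omega
    exact_mod_cast this
  have hr1 : ∀ i : ℕ, i ≤ m → 1 ≤ r i := by
    intro i hi
    have hi' : (i:ℝ) ≤ (m:ℝ) := by exact_mod_cast hi
    have h : d₀ * ((m:ℝ) - i) ≤ 0 := mul_nonpos_of_nonpos_of_nonneg hd₀' (by linarith)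
    simp only [r]; linarith
  have hrpos : ∀ i : ℕ, i ≤ m → 0 < r i := fun i hi => lt_of_lt_of_le one_pos (hr1 i hi)
  have hrm : ∀ i : ℕ, 1 ≤ i → i ≤ m → r i ≤ (m:ℝ) := by
    intro i h1 h2
    have hi1 : (1:ℝ) ≤ (i:ℝ) := by exact_mod_cast h1
    have hi2 : (i:ℝ) ≤ (m:ℝ) := by exact_mod_cast h2
    simp only [r]
    nlinarith [mul_nonneg (by linarith : (0:ℝ) ≤ 1 + d₀) (by linarith : (0:ℝ) ≤ (m:ℝ) - i)]
  have hp : ∀ i : ℕ, 1 ≤ i → i ≤ m → 0 < ((dV:ℝ) - r i) / r i := by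
    intro i h1 h2
    exact div_pos (by have := hrm i h1 h2; linarith) (hrpos i h2)
  have hconst : ∀ (i : ℕ) (y : ℝ), 1 ≤ i → i + 1 ≤ m →
      spow (spow y (r i / r (i+1))) (((dV:ℝ) - r i) / r i)
        = spow y (((dV:ℝ) - r i) / r (i+1)) := by
    intro i y h1 h2
    rw [spow_spow]
    congr 1
    have hri : r i ≠ 0 := (hrpos i (by omega)).ne'
    have hri1 : r (i+1) ≠ 0 := (hrpos (i+1) h2).ne'
    field_simp
  have hT : ∀ (e : ℕ → ℝ) (i : ℕ), i ∈ Finset.Icc 1 (m-1) →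
      (∫ x in (spow (e (i + 1)) (r i / r (i + 1)))..(ℓ i * e i),
        (spow x (((dV : ℝ) - r i) / r i)
          - spow (e (i + 1)) (((dV : ℝ) - r i) / r (i + 1))))
      = ∫ x in (spow (e (i + 1)) (r i / r (i + 1)))..(ℓ i * e i),
        (spow x (((dV : ℝ) - r i) / r i)
          - spow (spow (e (i + 1)) (r i / r (i + 1))) (((dV : ℝ) - r i) / r i)) := by
    intro e i hi
    simp only [Finset.mem_Icc] at hi
    rw [hconst i (e (i+1)) hi.1 (by omega)]
  have hTnn : ∀ (e : ℕ → ℝ) (i : ℕ), i ∈ Finset.Icc 1 (m-1) →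
      0 ≤ ∫ x in (spow (e (i + 1)) (r i / r (i + 1)))..(ℓ i * e i),
        (spow x (((dV : ℝ) - r i) / r i)
          - spow (e (i + 1)) (((dV : ℝ) - r i) / r (i + 1))) := by
    intro e i hi
    rw [hT e i hi]
    have hi' := Finset.mem_Icc.mp hi
    exact (spow_key (hp i hi'.1 (by omega)) _ _).1
  have hTzero : ∀ (e : ℕ → ℝ) (i : ℕ), i ∈ Finset.Icc 1 (m-1) →
      ((∫ x in (spow (e (i + 1)) (r i / r (i + 1)))..(ℓ i * e i),
        (spow x (((dV : ℝ) - r i) / r i)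
          - spow (e (i + 1)) (((dV : ℝ) - r i) / r (i + 1)))) = 0
        ↔ ℓ i * e i = spow (e (i + 1)) (r i / r (i + 1))) := by
    intro e i hi
    rw [hT e i hi]
    have hi' := Finset.mem_Icc.mp hi
    exact (spow_key (hp i hi'.1 (by omega)) _ _).2
  have hVnn : ∀ e, 0 ≤ V e := by
    intro e
    simp only [V]
    exact add_nonneg (Finset.sum_nonneg (hTnn e))
      (div_nonneg (pow_nonneg (abs_nonneg _) _) hdVpos.le)
  refine ⟨hVnn, fun e => ⟨fun h0 => ?_, fun hz => ?_⟩⟩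
  · -- forward
    simp only [V] at h0
    have hsnn : 0 ≤ ∑ i ∈ Finset.Icc 1 (m - 1),
        ∫ x in (spow (e (i + 1)) (r i / r (i + 1)))..(ℓ i * e i),
          (spow x (((dV : ℝ) - r i) / r i)
            - spow (e (i + 1)) (((dV : ℝ) - r i) / r (i + 1))) :=
      Finset.sum_nonneg (hTnn e)
    have hlnn : 0 ≤ |e m| ^ (dV : ℕ) / (dV : ℝ) :=
      div_nonneg (pow_nonneg (abs_nonneg _) _) hdVpos.le
    have hs0 : (∑ i ∈ Finset.Icc 1 (m - 1),
        ∫ x in (spow (e (i + 1)) (r i / r (i + 1)))..(ℓ i * e i),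
          (spow x (((dV : ℝ) - r i) / r i)
            - spow (e (i + 1)) (((dV : ℝ) - r i) / r (i + 1)))) = 0 := by linarith
    have hl0 : |e m| ^ (dV : ℕ) / (dV : ℝ) = 0 := by linarith
    have hterm0 := (Finset.sum_eq_zero_iff_of_nonneg (hTnn e)).mp hs0
    have hem : e m = 0 := by
      field_simp at hl0
      simpa [hdVne] using hl0
    have heq : ∀ i : ℕ, 1 ≤ i → i ≤ m - 1 →
        ℓ i * e i = spow (e (i + 1)) (r i / r (i + 1)) := by
      intro i h1 h2
      exact (hTzero e i (Finset.mem_Icc.mpr ⟨h1, h2⟩)).mp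
        (hterm0 i (Finset.mem_Icc.mpr ⟨h1, h2⟩))
    have hdown : ∀ k : ℕ, k ≤ m - 1 → e (m - k) = 0 := by
      intro k
      induction k with
      | zero => intro _; simpa using hem
      | succ n ih =>
        intro hn
        have hi1 : 1 ≤ m - (n+1) := by omega
        have hi2 : m - (n+1) ≤ m - 1 := by omega
        have h3 := heq (m - (n+1)) hi1 hi2
        have h4 : m - (n+1) + 1 = m - n := by omega
        rw [h4, ih (by omega), spow_zero] at h3
        rcases mul_eq_zero.mp h3 with h | h
        · exact absurd h (hℓ (m - (n+1)) hi1 hi2).ne'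
        · exact h
    intro i hi
    have hi' := Finset.mem_Icc.mp hi
    have := hdown (m - i) (by omega)
    rwa [show m - (m - i) = i by omega] at this
  · -- backward
    have hz' : ∀ i : ℕ, 1 ≤ i → i ≤ m → e i = 0 :=
      fun i a b => hz i (Finset.mem_Icc.mpr ⟨a, b⟩)
    simp only [V]
    have hs : (∑ i ∈ Finset.Icc 1 (m - 1),
        ∫ x in (spow (e (i + 1)) (r i / r (i + 1)))..(ℓ i * e i),
          (spow x (((dV : ℝ) - r i) / r i)
            - spow (e (i + 1)) (((dV : ℝ) - r i) / r (i + 1)))) = 0 := by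
      apply Finset.sum_eq_zero
      intro i hi
      have hi' := Finset.mem_Icc.mp hi
      apply (hTzero e i hi).mpr
      rw [hz' i hi'.1 (by omega), hz' (i+1) (by omega) (by omega), spow_zero, mul_zero]
    rw [hs, hz' m (by omega) le_rfl, abs_zero, zero_pow hdVne, zero_div, add_zero]
end
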